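/- Let (ν_n) be a sequence of probability measures on ℤ. The following are equivalent: (1) for every δ > 0, limsup_{n→∞} sup_{δ < |t| < 1/2} |ν̂_n(t)| < 1 (asymptotic strict aperiodicity); (2) there exist a constant C > 0 and an integer N₀ such that |ν̂_n(t)| ≤ e^{−Ct²} for all t ∈ [−1/2, 1/2) and all n > N₀. -/

import Mathlib

open scoped BigOperators
open Filter MeasureTheory

/-- A probability measure on `ℤ`, given as a nonnegative function summing to `1`. -/
def IsProbMeasure (ν : ℤ → ℝ) : Prop := (∀ k, 0 ≤ ν k) ∧ HasSum ν 1

/-- The Fourier transform `ν̂(t) = ∑_{k ∈ ℤ} ν(k) e^{2πikt}`. -/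
noncomputable def ft (ν : ℤ → ℝ) (t : ℝ) : ℂ :=
  ∑' k : ℤ, (ν k : ℂ) * Complex.exp (2 * Real.pi * Complex.I * (k : ℂ) * (t : ℂ))

/-- Convolution of two measures on `ℤ`. -/
noncomputable def conv (μ ν : ℤ → ℝ) (k : ℤ) : ℝ := ∑' j : ℤ, μ (k - j) * ν j

/-- `muN ν n = ν 0 ∗ ν 1 ∗ ⋯ ∗ ν n`. -/
noncomputable def muN (ν : ℕ → ℤ → ℝ) : ℕ → ℤ → ℝ
  | 0 => ν 0
  | n + 1 => conv (muN ν n) (ν (n + 1))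

/-- The expectation `E(ν) = ∑ k ν(k)`. -/
noncomputable def expectation (ν : ℤ → ℝ) : ℝ := ∑' k : ℤ, (k : ℝ) * ν k

/-- The second moment `m₂(ν)`. -/
noncomputable def m2 (ν : ℤ → ℝ) : ℝ := ∑' k : ℤ, |(k : ℝ)| ^ 2 * ν k

/-- The first moment `m₁(ν)`. -/
noncomputable def m1 (ν : ℤ → ℝ) : ℝ := ∑' k : ℤ, |(k : ℝ)| * ν k

/-- `ν` is strictly aperiodic: its support is not contained in any proper coset `r + βℤ`. -/
def StrictlyAperiodic (ν : ℤ → ℝ) : Prop :=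
  ∀ β r : ℤ, β.natAbs ≠ 1 → ∃ k : ℤ, ν k ≠ 0 ∧ ¬ β ∣ (k - r)

/-- The mass `ν(βℤ + r)` that `ν` gives to the coset `βℤ + r`. -/
noncomputable def cosetMass (ν : ℤ → ℝ) (β r : ℤ) : ℝ :=
  ∑' k : ℤ, if β ∣ (k - r) then ν k else 0


set_option maxHeartbeats 1000000

section AuxLemmas

noncomputable def F (ν : ℤ → ℝ) (t : ℝ) (k : ℤ) : ℂ :=
  (ν k : ℂ) * Complex.exp (2 * Real.pi * Complex.I * (k : ℂ) * (t : ℂ))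

lemma ft_eq (ν : ℤ → ℝ) (t : ℝ) : ft ν t = ∑' k : ℤ, F ν t k := rfl

lemma term_norm (ν : ℤ → ℝ) (hν : ∀ k, 0 ≤ ν k) (t : ℝ) (k : ℤ) :
    ‖F ν t k‖ = ν k := by
  have : (ν k : ℂ) * Complex.exp (2 * Real.pi * Complex.I * (k : ℂ) * (t : ℂ))
      = (ν k : ℂ) * Complex.exp ((2 * Real.pi * k * t : ℝ) * Complex.I) := by
    push_cast; ring_nf
  rw [F, this, norm_mul, Complex.norm_exp,
    Complex.norm_real, Real.norm_eq_abs, abs_of_nonneg (hν k)]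
  simp

lemma summable_term (ν : ℤ → ℝ) (h : IsProbMeasure ν) (t : ℝ) :
    Summable (fun k : ℤ => ‖F ν t k‖) := by
  simp only [term_norm ν h.1 t]; exact h.2.summable

lemma ft_norm_le_one (ν : ℤ → ℝ) (h : IsProbMeasure ν) (t : ℝ) : ‖ft ν t‖ ≤ 1 := by
  rw [ft_eq]
  refine (norm_tsum_le_tsum_norm (summable_term ν h t)).trans ?_
  have : ∑' k : ℤ, ‖F ν t k‖ = 1 := by
    simp only [term_norm ν h.1 t]; exact h.2.tsum_eq
  rw [this]

lemma norm_ft_sq (ν : ℤ → ℝ) (h : IsProbMeasure ν) (t : ℝ) :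
    ‖ft ν t‖ ^ 2 = ∑' p : ℤ × ℤ,
      ν p.1 * ν p.2 * Real.cos (2 * Real.pi * ((p.1 : ℝ) - p.2) * t) := by
  have hsf : Summable fun k => ‖F ν t k‖ := summable_term ν h t
  have hsg : Summable fun k => ‖(starRingEnd ℂ) (F ν t k)‖ := by simpa using hsf
  have h1 : ‖ft ν t‖ ^ 2 = (ft ν t * (starRingEnd ℂ) (ft ν t)).re := by
    rw [Complex.mul_conj]; simp [Complex.sq_norm]
  have h2 : (starRingEnd ℂ) (ft ν t) = ∑' k : ℤ, (starRingEnd ℂ) (F ν t k) := by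
    rw [ft_eq]; exact tsum_star
  have h3 : ft ν t * (starRingEnd ℂ) (ft ν t)
      = ∑' p : ℤ × ℤ, F ν t p.1 * (starRingEnd ℂ) (F ν t p.2) := by
    rw [h2, ft_eq]; exact tsum_mul_tsum_of_summable_norm hsf hsg
  have hsum : Summable fun p : ℤ × ℤ => F ν t p.1 * (starRingEnd ℂ) (F ν t p.2) :=
    (hsf.mul_norm hsg).of_norm
  rw [h1, h3, Complex.re_tsum hsum]
  congr 1; funext p
  have harg : (2 * Real.pi * Complex.I * (p.1 : ℂ) * (t : ℂ))
      + (starRingEnd ℂ) (2 * Real.pi * Complex.I * (p.2 : ℂ) * (t : ℂ))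
      = ((2 * Real.pi * ((p.1 : ℝ) - p.2) * t : ℝ) : ℂ) * Complex.I := by
    simp only [map_mul, Complex.conj_I, Complex.conj_ofReal, map_ofNat, map_intCast]
    push_cast
    ring
  have : F ν t p.1 * (starRingEnd ℂ) (F ν t p.2)
      = ((ν p.1 * ν p.2 : ℝ) : ℂ) * Complex.exp ((2 * Real.pi * ((p.1 : ℝ) - p.2) * t : ℝ) * Complex.I) := by
    rw [F, F, map_mul, Complex.conj_ofReal, ← Complex.exp_conj,
      mul_mul_mul_comm, ← Complex.exp_add, harg]
    push_cast
    ring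
  rw [this]
  rw [Complex.re_ofReal_mul, Complex.exp_ofReal_mul_I_re]

lemma summable_nu_pair (ν : ℤ → ℝ) (h : IsProbMeasure ν) :
    Summable fun p : ℤ × ℤ => ν p.1 * ν p.2 := by
  have := summable_mul_of_summable_norm (f := ν) (g := ν)
    (by simpa [abs_of_nonneg, h.1] using h.2.summable)
    (by simpa [abs_of_nonneg, h.1] using h.2.summable)
  exact this

lemma summable_cos (ν : ℤ → ℝ) (h : IsProbMeasure ν) (t : ℝ) :
    Summable fun p : ℤ × ℤ => ν p.1 * ν p.2 * Real.cos (2 * Real.pi * ((p.1 : ℝ) - p.2) * t) := by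
  refine Summable.of_norm_bounded (summable_nu_pair ν h) fun p => ?_
  rw [norm_mul]
  have h1 : ‖ν p.1 * ν p.2‖ = ν p.1 * ν p.2 := by
    rw [Real.norm_eq_abs, abs_of_nonneg (mul_nonneg (h.1 p.1) (h.1 p.2))]
  rw [h1, Real.norm_eq_abs]
  nlinarith [Real.abs_cos_le_one (2 * Real.pi * ((p.1 : ℝ) - p.2) * t),
    mul_nonneg (h.1 p.1) (h.1 p.2), abs_nonneg (Real.cos (2 * Real.pi * ((p.1 : ℝ) - p.2) * t))]

lemma summable_one_sub_cos (ν : ℤ → ℝ) (h : IsProbMeasure ν) (t : ℝ) :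
    Summable fun p : ℤ × ℤ =>
      ν p.1 * ν p.2 * (1 - Real.cos (2 * Real.pi * ((p.1 : ℝ) - p.2) * t)) := by
  have := (summable_nu_pair ν h).sub (summable_cos ν h t)
  refine this.congr fun p => ?_
  ring

lemma one_sub_norm_ft_sq (ν : ℤ → ℝ) (h : IsProbMeasure ν) (t : ℝ) :
    1 - ‖ft ν t‖ ^ 2 = ∑' p : ℤ × ℤ,
      ν p.1 * ν p.2 * (1 - Real.cos (2 * Real.pi * ((p.1 : ℝ) - p.2) * t)) := by
  have h1 : (1 : ℝ) = ∑' p : ℤ × ℤ, ν p.1 * ν p.2 := by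
    have := (h.2.mul h.2 (summable_nu_pair ν h)).tsum_eq
    rw [one_mul] at this
    exact this.symm
  rw [norm_ft_sq ν h t]
  nth_rewrite 1 [h1]
  rw [← Summable.tsum_sub (summable_nu_pair ν h) (summable_cos ν h t)]
  congr 1; funext p; ring

lemma doubling (ν : ℤ → ℝ) (h : IsProbMeasure ν) (t : ℝ) :
    1 - ‖ft ν (2 * t)‖ ^ 2 ≤ 4 * (1 - ‖ft ν t‖ ^ 2) := by
  rw [one_sub_norm_ft_sq ν h (2 * t), one_sub_norm_ft_sq ν h t, ← tsum_mul_left]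
  refine Summable.tsum_le_tsum (fun p => ?_) (summable_one_sub_cos ν h (2 * t))
    ((summable_one_sub_cos ν h t).mul_left 4)
  have harg : 2 * Real.pi * ((p.1 : ℝ) - p.2) * (2 * t)
      = 2 * (2 * Real.pi * ((p.1 : ℝ) - p.2) * t) := by ring
  rw [harg, Real.cos_two_mul]
  set c := Real.cos (2 * Real.pi * ((p.1 : ℝ) - p.2) * t)
  have hc1 : c ≤ 1 := Real.cos_le_one _
  have hc2 : -1 ≤ c := Real.neg_one_le_cos _
  have hnn : 0 ≤ ν p.1 * ν p.2 := mul_nonneg (h.1 p.1) (h.1 p.2)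
  nlinarith [sq_nonneg (1 - c), mul_nonneg hnn (sq_nonneg (1 - c))]

lemma iterate_doubling (ν : ℤ → ℝ) (h : IsProbMeasure ν) (t : ℝ) (m : ℕ) :
    1 - ‖ft ν (2 ^ m * t)‖ ^ 2 ≤ 4 ^ m * (1 - ‖ft ν t‖ ^ 2) := by
  induction m with
  | zero => simp
  | succ m ih =>
    have h1 : (2 : ℝ) ^ (m + 1) * t = 2 * (2 ^ m * t) := by ring
    rw [h1]
    calc 1 - ‖ft ν (2 * (2 ^ m * t))‖ ^ 2 ≤ 4 * (1 - ‖ft ν (2 ^ m * t)‖ ^ 2) :=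
          doubling ν h _
      _ ≤ 4 * (4 ^ m * (1 - ‖ft ν t‖ ^ 2)) := by linarith
      _ = 4 ^ (m + 1) * (1 - ‖ft ν t‖ ^ 2) := by ring

lemma ft_continuous (ν : ℤ → ℝ) (h : IsProbMeasure ν) : Continuous (ft ν) := by
  have hft : ft ν = fun t : ℝ => ∑' k : ℤ, F ν t k := rfl
  rw [hft]
  refine continuous_tsum (f := fun (k : ℤ) (t : ℝ) => F ν t k) (fun k => ?_) h.2.summable
    (fun k t => ?_)
  · exact continuous_const.mul (Complex.continuous_exp.comp
      (continuous_const.mul Complex.continuous_ofReal))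
  · rw [term_norm ν h.1 t k]

end AuxLemmas

/-- Lemma 2.1.7: for a sequence of probability measures `ν_n` on `ℤ`,
asymptotic strict aperiodicity, i.e. `limsup_n sup_{δ < |t| < 1/2} |ν̂_n(t)| < 1` for all
`δ > 0`, is equivalent to the existence of `C > 0` and `N₀` with `|ν̂_n(t)| ≤ e^{-Ct²}`
for all `n > N₀` and `t ∈ [-1/2, 1/2)`. -/
theorem asymptoticallyStrictlyAperiodic_iff_gaussian_bound
    (ν : ℕ → ℤ → ℝ) (hprob : ∀ n, IsProbMeasure (ν n)) :
    (∀ δ : ℝ, 0 < δ →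
      Filter.limsup
        (fun n => ⨆ t ∈ {t : ℝ | δ < |t| ∧ |t| < 1 / 2}, ‖ft (ν n) t‖) Filter.atTop < 1)
    ↔ (∃ C : ℝ, 0 < C ∧ ∃ N₀ : ℕ, ∀ n > N₀,
        ∀ t ∈ Set.Ico (-(1 : ℝ) / 2) (1 / 2), ‖ft (ν n) t‖ ≤ Real.exp (-C * t ^ 2)) := by
  classical
  constructor
  · intro H
    have hls := H (1/8) (by norm_num)
    set u : ℕ → ℝ :=
      fun n => ⨆ t ∈ {t : ℝ | (1:ℝ)/8 < |t| ∧ |t| < 1 / 2}, ‖ft (ν n) t‖ with hu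
    have hub : ∀ n, u n ≤ 1 := by
      intro n
      exact Real.iSup_le (fun t => Real.iSup_le
        (fun _ => ft_norm_le_one (ν n) (hprob n) t) zero_le_one) zero_le_one
    have hbdd : IsBoundedUnder (· ≤ ·) Filter.atTop u :=
      isBoundedUnder_of ⟨1, hub⟩
    obtain ⟨ρ, hρhalf, hρ1, hev⟩ :
        ∃ ρ : ℝ, (1:ℝ)/2 ≤ ρ ∧ ρ < 1 ∧ ∀ᶠ n in Filter.atTop, u n < ρ := by
      refine ⟨max ((Filter.limsup u Filter.atTop + 1) / 2) (1/2), le_max_right _ _, ?_, ?_⟩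
      · exact max_lt (by linarith) (by norm_num)
      · refine eventually_lt_of_limsup_lt ?_ hbdd
        exact lt_of_lt_of_le (by linarith) (le_max_left _ _)
    have hρ0 : 0 < ρ := by linarith
    obtain ⟨N₀, hN⟩ := eventually_atTop.1 hev
    have key : ∀ n, N₀ ≤ n → ∀ s : ℝ, 1/8 < |s| → |s| < 1/2 → ‖ft (ν n) s‖ ≤ ρ := by
      intro n hn s h1 h2
      have hmem : s ∈ {t : ℝ | (1:ℝ)/8 < |t| ∧ |t| < 1 / 2} := ⟨h1, h2⟩
      have hbdd2 : BddAbove (Set.range fun t : ℝ =>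
          ⨆ (_ : t ∈ {t : ℝ | (1:ℝ)/8 < |t| ∧ |t| < 1 / 2}), ‖ft (ν n) t‖) := by
        refine ⟨1, ?_⟩
        rintro x ⟨t, rfl⟩
        exact Real.iSup_le (fun _ => ft_norm_le_one (ν n) (hprob n) t) zero_le_one
      calc ‖ft (ν n) s‖
          = ⨆ (_ : s ∈ {t : ℝ | (1:ℝ)/8 < |t| ∧ |t| < 1 / 2}), ‖ft (ν n) s‖ :=
            (ciSup_pos (f := fun _ : s ∈ {t : ℝ | (1:ℝ)/8 < |t| ∧ |t| < 1 / 2} =>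
              ‖ft (ν n) s‖) hmem).symm
        _ ≤ u n := le_ciSup hbdd2 s
        _ ≤ ρ := (hN n hn).le
    have hρsq : 0 < 1 - ρ ^ 2 := by nlinarith
    have hlogρ : Real.log ρ < 0 := Real.log_neg hρ0 hρ1
    obtain ⟨C, hCpos, hCle1, hCle2⟩ :
        ∃ C : ℝ, 0 < C ∧ C ≤ 8 * (1 - ρ ^ 2) ∧ C ≤ -(4 * Real.log ρ) :=
      ⟨min (8 * (1 - ρ ^ 2)) (-(4 * Real.log ρ)),
        lt_min (by nlinarith) (by nlinarith), min_le_left _ _, min_le_right _ _⟩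
    refine ⟨C, hCpos, N₀, ?_⟩
    intro n hn t ht
    have hn' : N₀ ≤ n := hn.le
    rw [Set.mem_Ico] at ht
    obtain ⟨ht1, ht2⟩ := ht
    have htsq : t ^ 2 ≤ 1/4 := by nlinarith
    by_cases hsmall : |t| ≤ 1/8
    · by_cases ht0 : t = 0
      · subst ht0
        simpa using ft_norm_le_one (ν n) (hprob n) 0
      · have htpos : 0 < |t| := abs_pos.2 ht0
        have hex : ∃ m : ℕ, 1/8 < 2 ^ m * |t| := by
          obtain ⟨m, hm⟩ := pow_unbounded_of_one_lt ((1/8) / |t|) (one_lt_two (α := ℝ))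
          exact ⟨m, by rw [div_lt_iff₀ htpos] at hm; linarith⟩
        obtain ⟨m, hm, hmin⟩ : ∃ m : ℕ, (1/8 < 2 ^ m * |t|) ∧ ∀ k < m, ¬(1/8 < 2 ^ k * |t|) :=
          ⟨Nat.find hex, Nat.find_spec hex, fun k hk => Nat.find_min hex hk⟩
        have hm0 : m ≠ 0 := by
          intro h0
          rw [h0] at hm
          simp at hm
          linarith
        obtain ⟨m', rfl⟩ := Nat.exists_eq_succ_of_ne_zero hm0
        have hm' : ¬ (1/8 < 2 ^ m' * |t|) := hmin m' (Nat.lt_succ_self m')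
        push_neg at hm'
        have h14 : 2 ^ (m' + 1) * |t| ≤ 1/4 := by
          rw [pow_succ]
          nlinarith
        have habs : |2 ^ (m' + 1) * t| = 2 ^ (m' + 1) * |t| := by
          rw [abs_mul, abs_of_nonneg (by positivity : (0:ℝ) ≤ (2:ℝ) ^ (m' + 1))]
        have hub2 : ‖ft (ν n) (2 ^ (m' + 1) * t)‖ ≤ ρ := by
          apply key n hn' _ (by rw [habs]; exact hm) (by rw [habs]; linarith)
        set X := ‖ft (ν n) t‖ with hX
        have hXnn : 0 ≤ X := norm_nonneg _
        have hX1 : X ≤ 1 := ft_norm_le_one (ν n) (hprob n) t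
        have hiter := iterate_doubling (ν n) (hprob n) t (m' + 1)
        have hnormsq : ‖ft (ν n) (2 ^ (m' + 1) * t)‖ ^ 2 ≤ ρ ^ 2 :=
          pow_le_pow_left₀ (norm_nonneg _) hub2 2
        have step1 : 1 - ρ ^ 2 ≤ 4 ^ (m' + 1) * (1 - X ^ 2) := by
          calc 1 - ρ ^ 2 ≤ 1 - ‖ft (ν n) (2 ^ (m' + 1) * t)‖ ^ 2 := by linarith
            _ ≤ 4 ^ (m' + 1) * (1 - X ^ 2) := hiter
        have h4m : 16 * t ^ 2 * 4 ^ (m' + 1) ≤ 1 := by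
          have h2m : (2:ℝ) ^ (m' + 1) * |t| ≤ 1/4 := h14
          have hsq : ((2:ℝ) ^ (m' + 1) * |t|) ^ 2 ≤ (1/4) ^ 2 :=
            pow_le_pow_left₀ (by positivity) h2m 2
          have habs2 : |t| ^ 2 = t ^ 2 := sq_abs t
          have hpow : ((2:ℝ) ^ (m' + 1)) ^ 2 = 4 ^ (m' + 1) := by
            rw [← pow_mul, mul_comm, pow_mul]
            norm_num
          nlinarith [hsq]
        have hXsq : X ^ 2 ≤ 1 - 16 * (1 - ρ ^ 2) * t ^ 2 := by
          have hX2 : 0 ≤ 1 - X ^ 2 := by nlinarith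
          have step2 : 16 * t ^ 2 * (1 - ρ ^ 2) ≤ 16 * t ^ 2 * (4 ^ (m' + 1) * (1 - X ^ 2)) :=
            mul_le_mul_of_nonneg_left step1 (by positivity)
          have step3 : 16 * t ^ 2 * (4 ^ (m' + 1) * (1 - X ^ 2)) ≤ 1 * (1 - X ^ 2) := by
            rw [← mul_assoc]
            exact mul_le_mul_of_nonneg_right h4m hX2
          nlinarith
        have hexp : X ^ 2 ≤ Real.exp (-(16 * (1 - ρ ^ 2) * t ^ 2)) := by
          have := Real.add_one_le_exp (-(16 * (1 - ρ ^ 2) * t ^ 2))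
          linarith
        have hCt : -(16 * (1 - ρ ^ 2) * t ^ 2) ≤ -C * t ^ 2 * 2 := by
          nlinarith [sq_nonneg t]
        have hfin : X ^ 2 ≤ Real.exp (-C * t ^ 2) ^ 2 := by
          have h2 : Real.exp (-C * t ^ 2) ^ 2 = Real.exp (-C * t ^ 2 * 2) := by
            rw [sq, ← Real.exp_add]; ring_nf
          rw [h2]
          exact hexp.trans (Real.exp_le_exp.2 hCt)
        exact (pow_le_pow_iff_left₀ hXnn (Real.exp_nonneg _) two_ne_zero).1 hfin
    · push_neg at hsmall
      have hub2 : ‖ft (ν n) t‖ ≤ ρ := by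
        by_cases htlt : |t| < 1/2
        · exact key n hn' t hsmall htlt
        · have htm : t = -(1/2) := by
            rw [not_lt] at htlt
            rcases le_or_gt 0 t with h | h
            · rw [abs_of_nonneg h] at htlt; linarith
            · rw [abs_of_neg h] at htlt; linarith
          have hclosed : IsClosed {s : ℝ | ‖ft (ν n) s‖ ≤ ρ} :=
            isClosed_le ((ft_continuous (ν n) (hprob n)).norm) continuous_const
          have hsub : Set.Ioo (-(1:ℝ)/2) (-(1:ℝ)/4) ⊆ {s : ℝ | ‖ft (ν n) s‖ ≤ ρ} := by
            intro s hs
            obtain ⟨hs1, hs2⟩ := hs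
            have habs : |s| = -s := abs_of_neg (by linarith)
            exact key n hn' s (by rw [habs]; linarith) (by rw [habs]; linarith)
          have hIcc : Set.Icc (-(1:ℝ)/2) (-(1:ℝ)/4) ⊆ {s : ℝ | ‖ft (ν n) s‖ ≤ ρ} := by
            rw [← closure_Ioo (by norm_num : (-(1:ℝ)/2) ≠ -(1:ℝ)/4)]
            exact hclosed.closure_subset_iff.2 hsub
          rw [htm]
          exact hIcc ⟨by norm_num, by norm_num⟩
      have hlog : Real.log ρ ≤ -C * t ^ 2 := by nlinarith
      calc ‖ft (ν n) t‖ ≤ ρ := hub2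
        _ = Real.exp (Real.log ρ) := (Real.exp_log hρ0).symm
        _ ≤ Real.exp (-C * t ^ 2) := Real.exp_le_exp.2 hlog
  · rintro ⟨C, hC, N₀, hb⟩ δ hδ
    have hev : ∀ᶠ n in Filter.atTop,
        (⨆ t ∈ {t : ℝ | δ < |t| ∧ |t| < 1 / 2}, ‖ft (ν n) t‖) ≤ Real.exp (-C * δ ^ 2) := by
      rw [eventually_atTop]
      refine ⟨N₀ + 1, fun n hn => ?_⟩
      refine Real.iSup_le (fun t => Real.iSup_le (fun ht => ?_) (Real.exp_nonneg _))
        (Real.exp_nonneg _)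
      obtain ⟨ht1, ht2⟩ := ht
      have habs := abs_lt.1 ht2
      have h1 : ‖ft (ν n) t‖ ≤ Real.exp (-C * t ^ 2) :=
        hb n (lt_of_lt_of_le (Nat.lt_succ_self N₀) hn) t ⟨by linarith [habs.1], habs.2⟩
      refine h1.trans (Real.exp_le_exp.2 ?_)
      have hsq : δ ^ 2 ≤ t ^ 2 := by
        have := pow_le_pow_left₀ hδ.le ht1.le 2
        rwa [sq_abs] at this
      nlinarith
    have hcb : IsCoboundedUnder (· ≤ ·) Filter.atTop
        (fun n => ⨆ t ∈ {t : ℝ | δ < |t| ∧ |t| < 1 / 2}, ‖ft (ν n) t‖) := by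
      apply IsBoundedUnder.isCoboundedUnder_le
      apply isBoundedUnder_of
      exact ⟨0, fun n => Real.iSup_nonneg fun t => Real.iSup_nonneg fun _ => norm_nonneg _⟩
    have hlim := Filter.limsup_le_of_le hcb hev
    refine lt_of_le_of_lt hlim ?_
    have hneg : -C * δ ^ 2 < 0 := by
      have := mul_pos hC (pow_pos hδ 2)
      linarith
    calc Real.exp (-C * δ ^ 2) < Real.exp 0 := Real.exp_lt_exp.2 hneg
      _ = 1 := Real.exp_zero
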